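/- Let n ≥ 2, let f : [2n−1] → ℝ satisfy f(1)−f(2) ≥ f(2)−f(3) ≥ ⋯ ≥ f(2n−2)−f(2n−1) ≥ 0, and define b_j = (f(j)−f(j+1)) − (f(j+1)−f(j+2)) for j ∈ [2n−3] and b_{2n−2} = f(2n−2)−f(2n−1). Then for every (A,B) ∈ P_{2n}, Σ_{x∈A} Σ_{y∈B} f(|x−y|) ≤ n²·f(2n−1) + Σ_{j=1}^{2n−2} c_{2n,j}·b_j. -/

import Mathlib

/-- The constant `c_{2n,l}`: for `l` even, `−l³/12 + (2n−1)l²/4 + (6n−1)l/6`, and for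
`l` odd, `−l³/12 + (2n−1)l²/4 + (12n−5)l/12 + (2n−1)/4`. -/
noncomputable def cConst (n l : ℕ) : ℝ :=
  if Even l then
    -(l : ℝ) ^ 3 / 12 + (2 * (n : ℝ) - 1) * (l : ℝ) ^ 2 / 4 + (6 * (n : ℝ) - 1) * (l : ℝ) / 6
  else
    -(l : ℝ) ^ 3 / 12 + (2 * (n : ℝ) - 1) * (l : ℝ) ^ 2 / 4
      + (12 * (n : ℝ) - 5) * (l : ℝ) / 12 + (2 * (n : ℝ) - 1) / 4

/-!
With `b` the second differences of `f`, a discrete Taylor expansion gives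
`f l = f (2n-1) + ∑ j, (j + 1 - l)₊ b j`, and convexity makes every `b j` nonnegative, so it
suffices to bound `∑ x ∈ A, ∑ y ∈ B, (j + 1 - |x - y|)₊` by `c_{2n,j}` for each `j`.
That quantity counts, with multiplicity, the windows of `j + 1` consecutive integers containing
both `x` and `y`. A window meeting `[2n]` in `m` points contains at most `⌊m²/4⌋` pairs of
`A × B` (as `A` and `B` are disjoint), and summing `⌊m²/4⌋` over all windows gives exactly
`c_{2n,j}`.
-/

open Finset

theorem sum_Icc_eq_sub_of_secondDiff (f b : ℕ → ℝ) (N : ℕ)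
    (hb : ∀ j, 1 ≤ j → j + 2 ≤ N → b j = (f j - f (j + 1)) - (f (j + 1) - f (j + 2)))
    (hlast : b (N - 1) = f (N - 1) - f N) {l : ℕ} (hl : 1 ≤ l) (hlN : l < N) :
    ∑ j ∈ Icc l (N - 1), b j = f l - f (l + 1) := by
  obtain ⟨M, rfl⟩ : ∃ M, N = M + 1 := ⟨N - 1, by omega⟩
  rw [Nat.add_sub_cancel] at hlast ⊢
  have htelescope : ∑ j ∈ Ico l M, b j = (f l - f (l + 1)) - (f M - f (M + 1)) :=
    calc ∑ j ∈ Ico l M, b j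
        = ∑ j ∈ Ico l M, ((f (j + 1 + 1) - f (j + 1)) - (f (j + 1) - f j)) := by
          refine sum_congr rfl fun j hj => ?_
          obtain ⟨hlj, hjM⟩ := mem_Ico.1 hj
          rw [hb j (by omega) (by omega)]
          ring
      _ = (f l - f (l + 1)) - (f M - f (M + 1)) := by
          rw [sum_Ico_sub (fun i => f (i + 1) - f i) (by omega)]
          ring
  rw [← Ico_add_one_right_eq_Icc, sum_Ico_succ_top (by omega), htelescope, hlast]
  ring

theorem eq_add_sum_mul_of_secondDiff (f b : ℕ → ℝ) (N : ℕ)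
    (hb : ∀ j, 1 ≤ j → j + 2 ≤ N → b j = (f j - f (j + 1)) - (f (j + 1) - f (j + 2)))
    (hlast : b (N - 1) = f (N - 1) - f N) {l : ℕ} (hl : 1 ≤ l) (hlN : l ≤ N) :
    f l = f N + ∑ j ∈ Icc 1 (N - 1), ((j + 1 - l : ℕ) : ℝ) * b j := by
  have hswap : ∑ i ∈ Ico l N, ∑ j ∈ Icc i (N - 1), b j
      = ∑ j ∈ Icc 1 (N - 1), ∑ _i ∈ Icc l j, b j :=
    sum_comm' fun i j => by simp only [mem_Ico, mem_Icc]; omega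
  calc f l = f N + ∑ i ∈ Ico l N, (f i - f (i + 1)) := by
        rw [← neg_neg (∑ i ∈ Ico l N, _), ← sum_neg_distrib]
        simp only [neg_sub]
        rw [sum_Ico_sub f hlN]
        ring
    _ = f N + ∑ i ∈ Ico l N, ∑ j ∈ Icc i (N - 1), b j := by
        congr 1
        refine sum_congr rfl fun i hi => ?_
        obtain ⟨hli, hiN⟩ := mem_Ico.1 hi
        exact (sum_Icc_eq_sub_of_secondDiff f b N hb hlast (by omega) hiN).symm
    _ = f N + ∑ j ∈ Icc 1 (N - 1), ((j + 1 - l : ℕ) : ℝ) * b j := by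
        rw [hswap]
        simp only [sum_const, Nat.card_Icc, nsmul_eq_mul]

theorem secondDiff_nonneg (f b : ℕ → ℝ) (N : ℕ)
    (hconv : ∀ i, 1 ≤ i → i + 2 ≤ N → f (i + 1) - f (i + 2) ≤ f i - f (i + 1))
    (hdecr : 0 ≤ f (N - 1) - f N)
    (hb : ∀ j, 1 ≤ j → j + 2 ≤ N → b j = (f j - f (j + 1)) - (f (j + 1) - f (j + 2)))
    (hlast : b (N - 1) = f (N - 1) - f N) {j : ℕ} (hj : 1 ≤ j) (hjN : j < N) : 0 ≤ b j := by
  rcases (Nat.le_sub_one_of_lt hjN).lt_or_eq with hlt | rfl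
  · linarith [hb j hj (by omega), hconv j hj (by omega)]
  · exact hlast ▸ hdecr

-- With truncated subtraction the windows `Icc (r - j) r` for `r < j` are clipped to `Icc 0 r`,
-- which still gives `x ∈ Icc (r - j) r ↔ x ≤ r ≤ x + j`.
theorem card_filter_mem_window {N x : ℕ} (hx : x ≤ N) (y j : ℕ) :
    #{r ∈ range (N + j + 1) | x ∈ Icc (r - j) r ∧ y ∈ Icc (r - j) r} = j + 1 - x.dist y := by
  have hwin : {r ∈ range (N + j + 1) | x ∈ Icc (r - j) r ∧ y ∈ Icc (r - j) r}
      = Icc (max x y) (min x y + j) := by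
    ext r
    simp only [mem_filter, mem_range, mem_Icc]
    omega
  rw [hwin, Nat.card_Icc, Nat.dist]
  omega

theorem sum_sum_sub_dist_eq_sum_card_mul_card {A : Finset ℕ} {N : ℕ}
    (hA : ∀ x ∈ A, x ≤ N) (B : Finset ℕ) (j : ℕ) :
    ∑ x ∈ A, ∑ y ∈ B, (j + 1 - x.dist y)
      = ∑ r ∈ range (N + j + 1), #(A ∩ Icc (r - j) r) * #(B ∩ Icc (r - j) r) := by
  simp only [← filter_mem_eq_inter, card_filter, sum_mul_sum, ite_zero_mul_ite_zero, mul_one]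
  symm
  rw [sum_comm]
  refine sum_congr rfl fun x hx => ?_
  rw [sum_comm]
  refine sum_congr rfl fun y _ => ?_
  rw [← card_filter_mem_window (hA x hx), card_filter]

theorem mul_le_sq_div_four {a b m : ℕ} (h : a + b ≤ m) : a * b ≤ m ^ 2 / 4 := by
  rw [Nat.le_div_iff_mul_le (by norm_num)]
  nlinarith [sq_nonneg ((a : ℤ) - b)]

def quarterSquareSum (j : ℕ) : ℕ := ∑ m ∈ range (j + 1), m ^ 2 / 4

theorem card_Icc_one_inter_Icc (N a b : ℕ) : #(Icc 1 N ∩ Icc a b) = min N b + 1 - max 1 a := by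
  have hinter : Icc 1 N ∩ Icc a b = Icc (max 1 a) (min N b) := by
    ext; simp only [mem_inter, mem_Icc]; omega
  rw [hinter, Nat.card_Icc]

theorem sum_card_window_sq_div_four {N j : ℕ} (hj : j ≤ N) :
    ∑ r ∈ range (N + j + 1), #(Icc 1 N ∩ Icc (r - j) r) ^ 2 / 4
      = 2 * quarterSquareSum j + (N - j) * ((j + 1) ^ 2 / 4) := by
  set g : ℕ → ℕ := fun m => m ^ 2 / 4
  rw [← sum_range_add_sum_Ico _ (by omega : j + 1 ≤ N + j + 1),
    ← sum_Ico_consecutive _ (by omega : j + 1 ≤ N + 1) (by omega : N + 1 ≤ N + j + 1)]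
  have hleft : ∑ r ∈ range (j + 1), #(Icc 1 N ∩ Icc (r - j) r) ^ 2 / 4 = quarterSquareSum j :=
    sum_congr rfl fun r hr => by
      rw [card_Icc_one_inter_Icc]; simp only [mem_range] at hr; congr 2; omega
  have hmiddle : ∑ r ∈ Ico (j + 1) (N + 1), #(Icc 1 N ∩ Icc (r - j) r) ^ 2 / 4
      = (N - j) * ((j + 1) ^ 2 / 4) := by
    rw [sum_congr rfl fun r hr => ?_, sum_const, Nat.card_Ico, smul_eq_mul]
    · congr 1; omega
    · rw [card_Icc_one_inter_Icc]; simp only [mem_Ico] at hr; congr 2; omega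
  have hright : ∑ r ∈ Ico (N + 1) (N + j + 1), #(Icc 1 N ∩ Icc (r - j) r) ^ 2 / 4
      = quarterSquareSum j := by
    rw [sum_congr rfl fun r hr => ?_, sum_Ico_reflect g _ (n := N + j + 1) (by omega),
      quarterSquareSum, sum_range_eq_add_Ico _ (by omega)]
    · rw [show N + j + 1 + 1 - (N + j + 1) = 1 by omega,
        show N + j + 1 + 1 - (N + 1) = j + 1 by omega]
      simp [g]
    · show _ = g (N + j + 1 - r)
      rw [card_Icc_one_inter_Icc]; simp only [mem_Ico] at hr; congr 2; omega
  rw [hleft, hmiddle, hright]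
  ring

theorem two_mul_sq_div_four (k : ℕ) : (2 * k) ^ 2 / 4 = k ^ 2 := by
  rw [mul_pow]; norm_num

theorem two_mul_add_one_sq_div_four (k : ℕ) : (2 * k + 1) ^ 2 / 4 = k * (k + 1) := by
  rw [show (2 * k + 1) ^ 2 = 1 + 4 * (k * (k + 1)) by ring, Nat.add_mul_div_left _ _ (by norm_num)]
  simp

theorem quarterSquareSum_two_mul (k : ℕ) :
    (quarterSquareSum (2 * k) : ℝ) = k * (k + 1) * (4 * k - 1) / 6 := by
  induction k with
  | zero => simp [quarterSquareSum]
  | succ k ih =>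
    rw [quarterSquareSum, show 2 * (k + 1) + 1 = 2 * k + 1 + 1 + 1 by ring, sum_range_succ,
      sum_range_succ, ← quarterSquareSum, show 2 * k + 1 + 1 = 2 * (k + 1) by ring,
      two_mul_sq_div_four, two_mul_add_one_sq_div_four]
    push_cast [ih]
    ring

theorem quarterSquareSum_two_mul_add_one (k : ℕ) :
    (quarterSquareSum (2 * k + 1) : ℝ) = k * (k + 1) * (4 * k + 5) / 6 := by
  rw [quarterSquareSum, sum_range_succ, ← quarterSquareSum, two_mul_add_one_sq_div_four]
  push_cast [quarterSquareSum_two_mul]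
  ring

theorem cConst_eq {n j : ℕ} (hj : j ≤ 2 * n) :
    cConst n j = ((2 * quarterSquareSum j + (2 * n - j) * ((j + 1) ^ 2 / 4) : ℕ) : ℝ) := by
  rcases Nat.even_or_odd' j with ⟨k, rfl | rfl⟩
  · rw [cConst, if_pos (even_two_mul k), two_mul_add_one_sq_div_four]
    push_cast [Nat.cast_sub hj, quarterSquareSum_two_mul]
    ring
  · rw [cConst, if_neg (Nat.not_even_iff_odd.mpr (odd_two_mul_add_one k)),
      show 2 * k + 1 + 1 = 2 * (k + 1) by ring, two_mul_sq_div_four]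
    push_cast [Nat.cast_sub hj, quarterSquareSum_two_mul_add_one]
    ring

theorem sum_sum_sub_dist_le {A B : Finset ℕ} {N j : ℕ} (hj : j ≤ N) (hdisj : Disjoint A B)
    (hA : A ⊆ Icc 1 N) (hB : B ⊆ Icc 1 N) :
    ∑ x ∈ A, ∑ y ∈ B, (j + 1 - x.dist y)
      ≤ 2 * quarterSquareSum j + (N - j) * ((j + 1) ^ 2 / 4) := by
  rw [sum_sum_sub_dist_eq_sum_card_mul_card (fun x hx => (mem_Icc.1 (hA hx)).2),
    ← sum_card_window_sq_div_four hj]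
  gcongr with r
  apply mul_le_sq_div_four
  rw [← card_union_of_disjoint (hdisj.mono inter_subset_left inter_subset_left),
    ← union_inter_distrib_right]
  exact card_le_card (inter_subset_inter_right (union_subset hA hB))

theorem sum_sum_sub_dist_le_cConst {A B : Finset ℕ} {n j : ℕ} (hj : j ≤ 2 * n)
    (hdisj : Disjoint A B) (hA : A ⊆ Icc 1 (2 * n)) (hB : B ⊆ Icc 1 (2 * n)) :
    ∑ x ∈ A, ∑ y ∈ B, ((j + 1 - x.dist y : ℕ) : ℝ) ≤ cConst n j := by
  rw [cConst_eq hj]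
  exact_mod_cast sum_sum_sub_dist_le hj hdisj hA hB

theorem double_sum_upper_bound_general
    (n : ℕ) (f : ℕ → ℝ)
    (hconv : ∀ i : ℕ, 1 ≤ i → i + 2 ≤ 2 * n - 1 →
      f (i + 1) - f (i + 2) ≤ f i - f (i + 1))
    (hlast : 0 ≤ f (2 * n - 2) - f (2 * n - 1))
    (b : ℕ → ℝ)
    (hb : ∀ j : ℕ, 1 ≤ j → j ≤ 2 * n - 3 →
      b j = (f j - f (j + 1)) - (f (j + 1) - f (j + 2)))
    (hblast : b (2 * n - 2) = f (2 * n - 2) - f (2 * n - 1))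
    (A B : Finset ℕ) (hdisj : Disjoint A B)
    (hunion : A ∪ B = Finset.Icc 1 (2 * n))
    (hA : A.card = n) (hB : B.card = n) :
    ∑ x ∈ A, ∑ y ∈ B, f (Nat.dist x y) ≤
      (n : ℝ) ^ 2 * f (2 * n - 1) + ∑ j ∈ Finset.Icc 1 (2 * n - 2), cConst n j * b j := by
  have hAN : A ⊆ Icc 1 (2 * n) := hunion ▸ subset_union_left
  have hBN : B ⊆ Icc 1 (2 * n) := hunion ▸ subset_union_right
  rw [show 2 * n - 2 = 2 * n - 1 - 1 by omega] at hlast hblast ⊢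
  have hb' : ∀ j, 1 ≤ j → j + 2 ≤ 2 * n - 1 → b j = (f j - f (j + 1)) - (f (j + 1) - f (j + 2)) :=
    fun j hj1 hj2 => hb j hj1 (by omega)
  have hdecomp : ∀ x ∈ A, ∀ y ∈ B, f (x.dist y)
      = f (2 * n - 1) + ∑ j ∈ Icc 1 (2 * n - 1 - 1), ((j + 1 - x.dist y : ℕ) : ℝ) * b j := by
    intro x hx y hy
    have hxy : x ≠ y := fun h => disjoint_left.1 hdisj hx (h ▸ hy)
    have hx' := mem_Icc.1 (hAN hx)
    have hy' := mem_Icc.1 (hBN hy)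
    exact eq_add_sum_mul_of_secondDiff f b _ hb' hblast (by simp only [Nat.dist]; omega)
      (by simp only [Nat.dist]; omega)
  calc ∑ x ∈ A, ∑ y ∈ B, f (x.dist y)
      = ∑ x ∈ A, ∑ y ∈ B,
          (f (2 * n - 1) + ∑ j ∈ Icc 1 (2 * n - 1 - 1), ((j + 1 - x.dist y : ℕ) : ℝ) * b j) :=
        sum_congr rfl fun x hx => sum_congr rfl fun y hy => hdecomp x hx y hy
    _ = n ^ 2 * f (2 * n - 1) + ∑ j ∈ Icc 1 (2 * n - 1 - 1),
          (∑ x ∈ A, ∑ y ∈ B, ((j + 1 - x.dist y : ℕ) : ℝ)) * b j := by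
        simp only [sum_add_distrib, sum_const, hA, hB, nsmul_eq_mul, sum_mul]
        congr 1
        · ring
        · exact (sum_congr rfl fun x _ => sum_comm).trans sum_comm
    _ ≤ n ^ 2 * f (2 * n - 1) + ∑ j ∈ Icc 1 (2 * n - 1 - 1), cConst n j * b j := by
        gcongr with j hj
        all_goals obtain ⟨hj1, hj2⟩ := mem_Icc.1 hj
        · exact secondDiff_nonneg f b _ hconv hlast hb' hblast hj1 (by omega)
        · exact sum_sum_sub_dist_le_cConst (by omega) hdisj hAN hBN

/-- Let `n ≥ 2`, let `f : [2n−1] → ℝ` satisfy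
`f(1)−f(2) ≥ f(2)−f(3) ≥ ⋯ ≥ f(2n−2)−f(2n−1) ≥ 0`, and define
`b_j = (f(j)−f(j+1)) − (f(j+1)−f(j+2))` for `j ∈ [2n−3]` and
`b_{2n−2} = f(2n−2)−f(2n−1)`.  Then for every `(A,B) ∈ P_{2n}`,
`Σ_{x∈A} Σ_{y∈B} f(|x−y|) ≤ n²·f(2n−1) + Σ_{j=1}^{2n−2} c_{2n,j}·b_j`. -/
theorem double_sum_upper_bound
    (n : ℕ) (hn : 2 ≤ n) (f : ℕ → ℝ)
    (hconv : ∀ i : ℕ, 1 ≤ i → i + 2 ≤ 2 * n - 1 →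
      f (i + 1) - f (i + 2) ≤ f i - f (i + 1))
    (hlast : 0 ≤ f (2 * n - 2) - f (2 * n - 1))
    (b : ℕ → ℝ)
    (hb : ∀ j : ℕ, 1 ≤ j → j ≤ 2 * n - 3 →
      b j = (f j - f (j + 1)) - (f (j + 1) - f (j + 2)))
    (hblast : b (2 * n - 2) = f (2 * n - 2) - f (2 * n - 1))
    (A B : Finset ℕ) (hdisj : Disjoint A B)
    (hunion : A ∪ B = Finset.Icc 1 (2 * n))
    (hA : A.card = n) (hB : B.card = n) :
    ∑ x ∈ A, ∑ y ∈ B, f (Nat.dist x y) ≤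
      (n : ℝ) ^ 2 * f (2 * n - 1) + ∑ j ∈ Finset.Icc 1 (2 * n - 2), cConst n j * b j :=
  double_sum_upper_bound_general n f hconv hlast b hb hblast A B hdisj hunion hA hB
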